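/- Let D(σ,τ) := σ² + τ² + iσ and define, on ℝ² ∖ {(0,0)}, the functions m₁(σ,τ) := (σ² + iσ)/D(σ,τ), m₂(σ,τ) := στ/D(σ,τ), and m₃(σ,τ) := σ²/D(σ,τ). Then each m_j (j = 1,2,3) is smooth and there exists a constant c > 0 such that |m_j(σ,τ)| + |σ ∂_σ m_j(σ,τ)| + |τ ∂_τ m_j(σ,τ)| + |σ τ ∂_σ ∂_τ m_j(σ,τ)| ≤ c for all (σ,τ) ∈ ℝ² ∖ {(0,0)} and j = 1,2,3. -/

import Mathlib

open Complex

/-- The denominator `D(σ,τ) = σ² + τ² + iσ`. -/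
noncomputable def Dfl (q : ℝ × ℝ) : ℂ :=
  (q.1 : ℂ) ^ 2 + (q.2 : ℂ) ^ 2 + Complex.I * (q.1 : ℂ)

/-- The multiplier `m₁(σ,τ) = (σ² + iσ)/D(σ,τ)`. -/
noncomputable def mFl₁ (q : ℝ × ℝ) : ℂ :=
  ((q.1 : ℂ) ^ 2 + Complex.I * (q.1 : ℂ)) / Dfl q

/-- The multiplier `m₂(σ,τ) = στ/D(σ,τ)`. -/
noncomputable def mFl₂ (q : ℝ × ℝ) : ℂ :=
  ((q.1 : ℂ) * (q.2 : ℂ)) / Dfl q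

/-- The multiplier `m₃(σ,τ) = σ²/D(σ,τ)`. -/
noncomputable def mFl₃ (q : ℝ × ℝ) : ℂ :=
  (q.1 : ℂ) ^ 2 / Dfl q

/-- The Marcinkiewicz–Mihlin quantity
`|m| + |σ ∂_σ m| + |τ ∂_τ m| + |στ ∂_σ∂_τ m|` at the point `q = (σ,τ)`. -/
noncomputable def mihlinBound (m : ℝ × ℝ → ℂ) (q : ℝ × ℝ) : ℝ :=
  ‖m q‖ + ‖(q.1 : ℂ) * fderiv ℝ m q (1, 0)‖ + ‖(q.2 : ℂ) * fderiv ℝ m q (0, 1)‖ +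
    ‖(q.1 : ℂ) * (q.2 : ℂ) * fderiv ℝ (fun x => fderiv ℝ m x (0, 1)) q (1, 0)‖

/-!
Every multiplier is, up to an additive constant, a quotient `f = σ^a τ^b / D` with `a + b = 2`.
For such `f` the Euler operators `σ ∂_σ`, `τ ∂_τ` act by multiplication:
`σ ∂_σ f = f (a - S)` and `τ ∂_τ f = f (b - T)` with `S = σ ∂_σ D / D = σ (2σ + i) / D` and
`T = τ ∂_τ D / D = 2τ² / D`, and `σ τ ∂_σ ∂_τ f = σ ∂_σ (τ ∂_τ f) = f ((a - S)(b - T) + S T)`.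
Since `|D|² = (σ² + τ²)² + σ²`, both `σ² + τ²` and `|σ|` are at most `|D|`, so `|f| ≤ 1`,
`|S| ≤ 3` and `|T| ≤ 2`, which bounds every term uniformly.
-/

open Filter Topology

@[fun_prop]
theorem Complex.contDiff_ofReal {n : WithTop ℕ∞} : ContDiff ℝ n ((↑) : ℝ → ℂ) :=
  ofRealCLM.contDiff

theorem mul_natCast_mul_pow_sub_one {R : Type*} [CommSemiring R] (z : R) (n : ℕ) :
    z * (n * z ^ (n - 1)) = n * z ^ n := by
  rcases n with _ | n
  · simp
  · simp only [Nat.add_sub_cancel, pow_succ]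
    ring

theorem ContDiffAt.differentiableAt_fderiv_apply {E F : Type*} [NormedAddCommGroup E]
    [NormedSpace ℝ E] [NormedAddCommGroup F] [NormedSpace ℝ F] {f : E → F} {x : E}
    (hf : ContDiffAt ℝ 2 f x) (v : E) : DifferentiableAt ℝ (fun y => fderiv ℝ f y v) x :=
  ((hf.fderiv_right (m := 1) (by norm_num)).differentiableAt one_ne_zero).clm_apply
    (differentiableAt_const v)

section Partials

variable {E : Type*} [NormedAddCommGroup E] [NormedSpace ℝ E] {f : ℝ × ℝ → E} {q : ℝ × ℝ}
  {e : E}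

theorem fderiv_apply_one_zero (hf : DifferentiableAt ℝ f q)
    (h : HasDerivAt (fun s => f (s, q.2)) e q.1) : fderiv ℝ f q (1, 0) = e :=
  (hf.hasFDerivAt.comp_hasDerivAt q.1
    ((hasDerivAt_id q.1).prodMk (hasDerivAt_const q.1 q.2))).unique h

theorem fderiv_apply_zero_one (hf : DifferentiableAt ℝ f q)
    (h : HasDerivAt (fun t => f (q.1, t)) e q.2) : fderiv ℝ f q (0, 1) = e :=
  (hf.hasFDerivAt.comp_hasDerivAt q.2
    ((hasDerivAt_const q.2 q.1).prodMk (hasDerivAt_id q.2))).unique h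

end Partials

noncomputable def eulerFst (f : ℝ × ℝ → ℂ) (q : ℝ × ℝ) : ℂ :=
  q.1 * fderiv ℝ f q (1, 0)

noncomputable def eulerSnd (f : ℝ × ℝ → ℂ) (q : ℝ × ℝ) : ℂ :=
  q.2 * fderiv ℝ f q (0, 1)

section Euler

variable {f g : ℝ × ℝ → ℂ} {q : ℝ × ℝ}

theorem eulerFst_congr (h : f =ᶠ[𝓝 q] g) : eulerFst f q = eulerFst g q := by
  rw [eulerFst, eulerFst, h.fderiv_eq]

theorem eulerFst_mul (hf : DifferentiableAt ℝ f q) (hg : DifferentiableAt ℝ g q) :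
    eulerFst (fun x => f x * g x) q = eulerFst f q * g q + f q * eulerFst g q := by
  simp only [eulerFst, fderiv_fun_mul hf hg, add_apply, smul_apply, smul_eq_mul]
  ring

theorem eulerFst_const_sub (c : ℂ) : eulerFst (fun x => c - f x) q = -eulerFst f q := by
  simp [eulerFst, fderiv_const_sub]

theorem eulerFst_const_mul (hf : DifferentiableAt ℝ f q) (c : ℂ) :
    eulerFst (fun x => c * f x) q = c * eulerFst f q := by
  simp only [eulerFst, fderiv_const_mul hf, smul_apply, smul_eq_mul]
  ring

/-- `∂_σ` does not see the factor `τ` of `τ ∂_τ`. -/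
theorem fst_mul_snd_mul_fderiv_fderiv
    (hf : DifferentiableAt ℝ (fun x => fderiv ℝ f x (0, 1)) q) :
    (q.1 : ℂ) * q.2 * fderiv ℝ (fun x => fderiv ℝ f x (0, 1)) q (1, 0) =
      eulerFst (eulerSnd f) q := by
  have hsnd : fderiv ℝ (fun x : ℝ × ℝ => (x.2 : ℂ)) q (1, 0) = 0 :=
    fderiv_apply_one_zero (by fun_prop) (hasDerivAt_const q.1 (q.2 : ℂ))
  change _ = (q.1 : ℂ) * fderiv ℝ (fun x => (x.2 : ℂ) * fderiv ℝ f x (0, 1)) q (1, 0)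
  rw [fderiv_fun_mul (by fun_prop) hf]
  simp only [add_apply, smul_apply, smul_eq_mul, hsnd]
  ring

theorem mihlinBound_eq (hf : DifferentiableAt ℝ (fun x => fderiv ℝ f x (0, 1)) q) :
    mihlinBound f q = ‖f q‖ + ‖eulerFst f q‖ + ‖eulerSnd f q‖ + ‖eulerFst (eulerSnd f) q‖ := by
  rw [mihlinBound, fst_mul_snd_mul_fderiv_fderiv hf]
  rfl

theorem mihlinBound_congr (h : f =ᶠ[𝓝 q] g) : mihlinBound f q = mihlinBound g q := by
  have hderiv : (fun x => fderiv ℝ f x (0, 1)) =ᶠ[𝓝 q] fun x => fderiv ℝ g x (0, 1) :=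
    h.eventuallyEq_nhds.mono fun x hx => by simp only [hx.fderiv_eq]
  rw [mihlinBound, mihlinBound, h.eq_of_nhds, h.fderiv_eq, hderiv.fderiv_eq]

theorem mihlinBound_const_sub_le (c : ℂ) :
    mihlinBound (fun x => c - f x) q ≤ ‖c‖ + mihlinBound f q := by
  simp only [mihlinBound, fderiv_const_sub, neg_apply]
  rw [show (fun x => -fderiv ℝ f x (0, 1)) = -fun x => fderiv ℝ f x (0, 1) from rfl, fderiv_neg]
  simp only [neg_apply, mul_neg, norm_neg]
  linarith [norm_sub_le c (f q)]

end Euler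

section Denominator

variable (q : ℝ × ℝ)

theorem contDiff_Dfl {n : WithTop ℕ∞} : ContDiff ℝ n Dfl := by
  unfold Dfl
  fun_prop

theorem norm_Dfl_sq : ‖Dfl q‖ ^ 2 = (q.1 ^ 2 + q.2 ^ 2) ^ 2 + q.1 ^ 2 := by
  rw [Complex.sq_norm, Complex.normSq_apply]
  simp [Dfl, pow_two]

theorem sq_add_sq_le_norm_Dfl : q.1 ^ 2 + q.2 ^ 2 ≤ ‖Dfl q‖ :=
  (le_abs_self _).trans <|
    abs_le_of_sq_le_sq (by nlinarith [norm_Dfl_sq q, sq_nonneg q.1]) (norm_nonneg _)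

theorem abs_fst_le_norm_Dfl : |q.1| ≤ ‖Dfl q‖ :=
  abs_le_of_sq_le_sq (by nlinarith [norm_Dfl_sq q, sq_nonneg (q.1 ^ 2 + q.2 ^ 2)]) (norm_nonneg _)

theorem Dfl_ne_zero {q : ℝ × ℝ} (hq : q ≠ 0) : Dfl q ≠ 0 := by
  intro h
  have := sq_add_sq_le_norm_Dfl q
  rw [h, norm_zero] at this
  exact hq (Prod.ext (pow_eq_zero_iff two_ne_zero |>.1 (by nlinarith [sq_nonneg q.2]))
    (pow_eq_zero_iff two_ne_zero |>.1 (by nlinarith [sq_nonneg q.1])))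

theorem hasDerivAt_Dfl_fst : HasDerivAt (fun s => Dfl (s, q.2)) (2 * q.1 + I) q.1 := by
  have hs : HasDerivAt (fun s : ℝ => (s : ℂ)) 1 q.1 := (hasDerivAt_id _).ofReal_comp
  simpa [Dfl] using ((hs.fun_pow 2).add_const ((q.2 : ℂ) ^ 2)).fun_add (hs.const_mul I)

theorem hasDerivAt_Dfl_snd : HasDerivAt (fun t => Dfl (q.1, t)) (2 * q.2) q.2 := by
  have ht : HasDerivAt (fun t : ℝ => (t : ℂ)) 1 q.2 := (hasDerivAt_id _).ofReal_comp
  simpa [Dfl] using ((ht.fun_pow 2).const_add ((q.1 : ℂ) ^ 2)).add_const (I * q.1)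

end Denominator

noncomputable def monomialDiv (a b : ℕ) (q : ℝ × ℝ) : ℂ :=
  (q.1 : ℂ) ^ a * (q.2 : ℂ) ^ b / Dfl q

/-- `σ ∂_σ D / D`; its companion `τ ∂_τ D / D = 2τ²/D` is `2 * monomialDiv 0 2`. -/
noncomputable def fstLogDerivDfl (q : ℝ × ℝ) : ℂ :=
  q.1 * (2 * q.1 + I) / Dfl q

section Monomial

variable {a b : ℕ} {q : ℝ × ℝ}

theorem contDiffAt_monomialDiv {n : WithTop ℕ∞} (a b : ℕ) (hq : q ≠ 0) :
    ContDiffAt ℝ n (monomialDiv a b) q := by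
  have hnum : ContDiff ℝ n fun x : ℝ × ℝ => (x.1 : ℂ) ^ a * (x.2 : ℂ) ^ b := by fun_prop
  have hinv : ContDiffAt ℝ n (fun x => (Dfl x)⁻¹) q :=
    contDiff_Dfl.contDiffAt.fun_inv (Dfl_ne_zero hq)
  exact (hnum.contDiffAt.mul hinv).congr_of_eventuallyEq (.of_forall fun x => div_eq_mul_inv _ _)

theorem norm_monomialDiv_le_one (hab : a + b = 2) (q : ℝ × ℝ) : ‖monomialDiv a b q‖ ≤ 1 := by
  rw [monomialDiv, norm_div]
  refine div_le_one_of_le₀ ((le_trans ?_ (sq_add_sq_le_norm_Dfl q))) (norm_nonneg _)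
  obtain ⟨rfl, rfl⟩ | ⟨rfl, rfl⟩ | ⟨rfl, rfl⟩ : a = 2 ∧ b = 0 ∨ a = 1 ∧ b = 1 ∨ a = 0 ∧ b = 2 := by
    omega
  all_goals simp only [norm_mul, norm_pow, norm_real, Real.norm_eq_abs, sq_abs, pow_zero, pow_one,
    norm_one]
  · linarith [sq_nonneg q.2]
  · nlinarith [sq_nonneg (|q.1| - |q.2|), sq_abs q.1, sq_abs q.2]
  · linarith [sq_nonneg q.1]

theorem norm_fstLogDerivDfl_le (q : ℝ × ℝ) : ‖fstLogDerivDfl q‖ ≤ 3 := by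
  rw [fstLogDerivDfl, norm_div]
  refine div_le_of_le_mul₀ (norm_nonneg _) (by norm_num) ?_
  have hnum : ‖(q.1 : ℂ) * (2 * q.1 + I)‖ ≤ 2 * q.1 ^ 2 + |q.1| := by
    calc ‖(q.1 : ℂ) * (2 * q.1 + I)‖ ≤ |q.1| * (2 * |q.1| + 1) := by
          rw [norm_mul, norm_real, Real.norm_eq_abs]
          gcongr
          refine (norm_add_le _ _).trans ?_
          simp
      _ = 2 * q.1 ^ 2 + |q.1| := by rw [← sq_abs q.1]; ring
  linarith [sq_add_sq_le_norm_Dfl q, abs_fst_le_norm_Dfl q, sq_nonneg q.2]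

theorem eulerFst_monomialDiv (hq : q ≠ 0) :
    eulerFst (monomialDiv a b) q = monomialDiv a b q * (a - fstLogDerivDfl q) := by
  have hD := Dfl_ne_zero hq
  have hslice := ((((hasDerivAt_pow a (q.1 : ℂ)).comp_ofReal).mul_const
    ((q.2 : ℂ) ^ b)).div (hasDerivAt_Dfl_fst q) hD)
  rw [eulerFst, fderiv_apply_one_zero ((contDiffAt_monomialDiv a b hq).differentiableAt
    one_ne_zero) hslice, monomialDiv, fstLogDerivDfl]
  field_simp
  linear_combination (q.2 : ℂ) ^ b * Dfl q * mul_natCast_mul_pow_sub_one (q.1 : ℂ) a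

theorem eulerSnd_monomialDiv (hq : q ≠ 0) :
    eulerSnd (monomialDiv a b) q = monomialDiv a b q * (b - 2 * monomialDiv 0 2 q) := by
  have hD := Dfl_ne_zero hq
  have hslice := ((((hasDerivAt_pow b (q.2 : ℂ)).comp_ofReal).const_mul
    ((q.1 : ℂ) ^ a)).div (hasDerivAt_Dfl_snd q) hD)
  rw [eulerSnd, fderiv_apply_zero_one ((contDiffAt_monomialDiv a b hq).differentiableAt
    one_ne_zero) hslice, monomialDiv, monomialDiv]
  field_simp
  linear_combination (q.1 : ℂ) ^ a * Dfl q * mul_natCast_mul_pow_sub_one (q.2 : ℂ) b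

theorem eulerFst_eulerSnd_monomialDiv (hq : q ≠ 0) :
    eulerFst (eulerSnd (monomialDiv a b)) q = monomialDiv a b q *
      ((a - fstLogDerivDfl q) * (b - 2 * monomialDiv 0 2 q) +
        2 * monomialDiv 0 2 q * fstLogDerivDfl q) := by
  have hdiff {i j : ℕ} : DifferentiableAt ℝ (monomialDiv i j) q :=
    (contDiffAt_monomialDiv i j hq).differentiableAt one_ne_zero
  have hsnd : eulerSnd (monomialDiv a b) =ᶠ[𝓝 q]
      fun x => monomialDiv a b x * (b - 2 * monomialDiv 0 2 x) :=
    eventually_of_mem (isOpen_ne.mem_nhds hq) fun x hx => eulerSnd_monomialDiv hx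
  rw [eulerFst_congr hsnd, eulerFst_mul hdiff ((hdiff.const_mul 2).const_sub _),
    eulerFst_const_sub, eulerFst_const_mul hdiff, eulerFst_monomialDiv hq,
    eulerFst_monomialDiv hq]
  push_cast
  ring

theorem mihlinBound_monomialDiv_le (hab : a + b = 2) (hq : q ≠ 0) :
    mihlinBound (monomialDiv a b) q ≤ 36 := by
  have hf := norm_monomialDiv_le_one hab q
  have hS := norm_fstLogDerivDfl_le q
  have hT : ‖2 * monomialDiv 0 2 q‖ ≤ 2 := by
    rw [norm_mul, Complex.norm_two]
    linarith [norm_monomialDiv_le_one (a := 0) (b := 2) rfl q]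
  have ha : ‖(a : ℂ) - fstLogDerivDfl q‖ ≤ 5 := by
    refine (norm_sub_le _ _).trans ?_
    rw [Complex.norm_natCast]
    linarith [show (a : ℝ) ≤ 2 by exact_mod_cast (show a ≤ 2 by omega)]
  have hb : ‖(b : ℂ) - 2 * monomialDiv 0 2 q‖ ≤ 4 := by
    refine (norm_sub_le _ _).trans ?_
    rw [Complex.norm_natCast]
    linarith [show (b : ℝ) ≤ 2 by exact_mod_cast (show b ≤ 2 by omega)]
  have hmixed : ‖((a : ℂ) - fstLogDerivDfl q) * (b - 2 * monomialDiv 0 2 q) +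
      2 * monomialDiv 0 2 q * fstLogDerivDfl q‖ ≤ 26 := by
    refine (norm_add_le _ _).trans ?_
    rw [norm_mul, norm_mul]
    nlinarith [norm_nonneg ((a : ℂ) - fstLogDerivDfl q), norm_nonneg (fstLogDerivDfl q)]
  have hg := ((contDiffAt_monomialDiv a b hq).differentiableAt_fderiv_apply ((0 : ℝ), (1 : ℝ)))
  rw [mihlinBound_eq hg, eulerFst_monomialDiv hq, eulerSnd_monomialDiv hq,
    eulerFst_eulerSnd_monomialDiv hq, norm_mul, norm_mul, norm_mul]
  have h0 := norm_nonneg (monomialDiv a b q)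
  nlinarith

end Monomial

theorem mFl₁_eventuallyEq {q : ℝ × ℝ} (hq : q ≠ 0) :
    mFl₁ =ᶠ[𝓝 q] fun x => 1 - monomialDiv 0 2 x := by
  filter_upwards [isOpen_ne.mem_nhds hq] with x hx
  rw [mFl₁, monomialDiv, eq_sub_iff_add_eq, ← add_div, div_eq_one_iff_eq (Dfl_ne_zero hx), Dfl]
  ring

theorem mFl₂_eq : mFl₂ = monomialDiv 1 1 := by
  funext q
  simp [mFl₂, monomialDiv]

theorem mFl₃_eq : mFl₃ = monomialDiv 2 0 := by
  funext q
  simp [mFl₃, monomialDiv]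

/-- The multipliers `m₁ = (σ² + iσ)/D`, `m₂ = στ/D`, `m₃ = σ²/D` with
`D = σ² + τ² + iσ` are smooth on `ℝ² ∖ {0}` and satisfy a uniform
Marcinkiewicz–Mihlin bound there. -/
theorem statement14 :
    ContDiffOn ℝ (⊤ : ℕ∞) mFl₁ {q : ℝ × ℝ | q ≠ 0} ∧
    ContDiffOn ℝ (⊤ : ℕ∞) mFl₂ {q : ℝ × ℝ | q ≠ 0} ∧
    ContDiffOn ℝ (⊤ : ℕ∞) mFl₃ {q : ℝ × ℝ | q ≠ 0} ∧
    ∃ c : ℝ, 0 < c ∧ ∀ q : ℝ × ℝ, q ≠ 0 →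
      mihlinBound mFl₁ q ≤ c ∧ mihlinBound mFl₂ q ≤ c ∧ mihlinBound mFl₃ q ≤ c := by
  refine ⟨fun q hq => ?_, fun q hq => ?_, fun q hq => ?_, 37, by norm_num,
    fun q hq => ⟨?_, ?_, ?_⟩⟩
  · exact ((contDiffAt_const.sub (contDiffAt_monomialDiv 0 2 hq)).congr_of_eventuallyEq
      (mFl₁_eventuallyEq hq)).contDiffWithinAt
  · exact mFl₂_eq ▸ (contDiffAt_monomialDiv 1 1 hq).contDiffWithinAt
  · exact mFl₃_eq ▸ (contDiffAt_monomialDiv 2 0 hq).contDiffWithinAt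
  · rw [mihlinBound_congr (mFl₁_eventuallyEq hq)]
    refine (mihlinBound_const_sub_le 1).trans ?_
    linarith [norm_one (α := ℂ), mihlinBound_monomialDiv_le (a := 0) (b := 2) rfl hq]
  · exact mFl₂_eq ▸ (mihlinBound_monomialDiv_le rfl hq).trans (by norm_num)
  · exact mFl₃_eq ▸ (mihlinBound_monomialDiv_le rfl hq).trans (by norm_num)
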